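/- Let n ≥ 0 be an integer and a, q nonzero complex numbers with q^{2k} ≠ 1 for 1 ≤ k ≤ i+1. For integers 0 ≤ j ≤ i define κ_{i,j} = 2n(n−1) − n(i+j) − i(i−3)/2 + j(j+1)/2 and λ_{i,j} = a^{2n−i−j} q^{κ_{i,j}} · [i choose j]_q · {n+i−j−2; a}_{i−j}. Then for all integers 0 ≤ j < i one has the Pascal-type recursion λ_{i+1,j+1} = a^{−2} q^{−2(n+i−j−1)} λ_{i,j} + a^{−1} q^{−(n+i−j−2)} {n+i−j−2; a} · λ_{i,j+1}. -/

import Mathlib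

open Finset

/-- The balanced q-bracket `{n} = q^n - q^(-n)`. -/
noncomputable def qbr (q : ℂ) (n : ℤ) : ℂ := q ^ n - q ^ (-n)

/-- The two-variable bracket `{n; a} = a q^n - a⁻¹ q^(-n)`. -/
noncomputable def qbrA (a q : ℂ) (n : ℤ) : ℂ := a * q ^ n - a⁻¹ * q ^ (-n)

/-- Descending product `{n}_i = {n}{n-1}⋯{n-i+1}` (equal to 1 when `i = 0`). -/
noncomputable def qbrP (q : ℂ) (n : ℤ) (i : ℕ) : ℂ := ∏ k ∈ Finset.range i, qbr q (n - k)

/-- Descending product `{n; a}_i = {n; a}{n-1; a}⋯{n-i+1; a}` (equal to 1 when `i = 0`). -/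
noncomputable def qbrAP (a q : ℂ) (n : ℤ) (i : ℕ) : ℂ := ∏ k ∈ Finset.range i, qbrA a q (n - k)

/-- Ascending product `{n; a}{n+1; a}⋯{n+i-1; a}` (used for `{-n; a}_i`, equal to 1 when `i = 0`). -/
noncomputable def qbrAPasc (a q : ℂ) (n : ℤ) (i : ℕ) : ℂ := ∏ k ∈ Finset.range i, qbrA a q (n + k)

/-- The factorial `{n}! = {n}_n`. -/
noncomputable def qfac (q : ℂ) (n : ℕ) : ℂ := qbrP q n n

/-- The balanced q-binomial coefficient `[n choose i] = {n}!/({i}!{n-i}!)`. -/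
noncomputable def qbinom (q : ℂ) (n i : ℕ) : ℂ := qfac q n / (qfac q i * qfac q (n - i))

/-- The exponent `κ_{i,j} = 2n(n−1) − n(i+j) − i(i−3)/2 + j(j+1)/2`. -/
def kap (n i j : ℕ) : ℤ :=
  2 * (n : ℤ) * ((n : ℤ) - 1) - (n : ℤ) * ((i : ℤ) + (j : ℤ))
    - (i : ℤ) * ((i : ℤ) - 3) / 2 + (j : ℤ) * ((j : ℤ) + 1) / 2

/-- The entry `λ_{i,j} = a^{2n−i−j} q^{κ_{i,j}} [i choose j]_q {n+i−j−2; a}_{i−j}`. -/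
noncomputable def lamE (a q : ℂ) (n i j : ℕ) : ℂ :=
  a ^ (2 * (n : ℤ) - (i : ℤ) - (j : ℤ)) * q ^ (kap n i j) * qbinom q i j *
    qbrAP a q ((n : ℤ) + (i : ℤ) - (j : ℤ) - 2) (i - j)


/-!
The entries `λ_{i+1,j+1}` and `λ_{i,j}` carry the same factor `{n+i−j−2; a}_{i−j}`, and that of
`λ_{i,j+1}` is the same product without its first bracket `{n+i−j−2; a}`. So, once the powers of
`a` and `q` are matched (the exponent `κ` drops by `2n+i−j−2` along the diagonal and by `n−j−1`
along a row), the recursion is the balanced q-Pascal rule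
`[i+1, j+1] = q^{j−i} [i, j] + q^{j+1} [i, j+1]`, which in turn is the bracket identity
`{x+y} = q^{−y} {x} + q^x {y}` at `x = j+1`, `y = i−j`.
-/

lemma qbr_eq_zpow_neg_mul (q : ℂ) (hq : q ≠ 0) (k : ℤ) :
    qbr q k = q ^ (-k) * (q ^ (2 * k) - 1) := by
  rw [qbr, mul_sub, ← zpow_add₀ hq, mul_one]
  ring_nf

lemma qbr_natCast_ne_zero (q : ℂ) (hq : q ≠ 0) (k : ℕ) (hk : q ^ (2 * k) ≠ 1) :
    qbr q k ≠ 0 := by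
  rw [qbr_eq_zpow_neg_mul q hq]
  refine mul_ne_zero (zpow_ne_zero _ hq) (sub_ne_zero.mpr ?_)
  exact_mod_cast hk

lemma qbr_add (q : ℂ) (hq : q ≠ 0) (x y : ℤ) :
    qbr q (x + y) = q ^ (-y) * qbr q x + q ^ x * qbr q y := by
  simp only [qbr, mul_sub, ← zpow_add₀ hq]
  ring_nf

lemma qfac_succ (q : ℂ) (k : ℕ) : qfac q (k + 1) = qfac q k * qbr q ((k : ℤ) + 1) := by
  rw [qfac, qbrP, prod_range_succ', qfac, qbrP]
  push_cast
  simp_rw [add_sub_add_right_eq_sub, sub_zero]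

lemma qfac_ne_zero (q : ℂ) (hq : q ≠ 0) (k : ℕ)
    (hroot : ∀ l : ℕ, 1 ≤ l → l ≤ k → q ^ (2 * l) ≠ 1) : qfac q k ≠ 0 := by
  rw [qfac, qbrP, prod_ne_zero_iff]
  intro t ht
  have htk := mem_range.mp ht
  rw [show (k : ℤ) - t = ((k - t : ℕ) : ℤ) by omega]
  exact qbr_natCast_ne_zero q hq _ (hroot _ (by omega) (by omega))

lemma qbrAP_succ (a q : ℂ) (m : ℤ) (k : ℕ) :
    qbrAP a q m (k + 1) = qbrA a q m * qbrAP a q (m - 1) k := by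
  rw [qbrAP, prod_range_succ', mul_comm, qbrAP]
  push_cast
  simp_rw [sub_zero, sub_add_eq_sub_sub, sub_right_comm m]

lemma qbinom_succ_succ (q : ℂ) (hq : q ≠ 0) {i j : ℕ} (hij : j < i)
    (hroot : ∀ k : ℕ, 1 ≤ k → k ≤ i → q ^ (2 * k) ≠ 1) :
    qbinom q (i + 1) (j + 1) =
      q ^ ((j : ℤ) - i) * qbinom q i j + q ^ ((j : ℤ) + 1) * qbinom q i (j + 1) := by
  obtain ⟨r, rfl⟩ := Nat.exists_eq_add_of_lt hij
  have hfj : qfac q j ≠ 0 := qfac_ne_zero q hq j fun l h1 h2 => hroot l h1 (by omega)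
  have hfr : qfac q r ≠ 0 := qfac_ne_zero q hq r fun l h1 h2 => hroot l h1 (by omega)
  have hbj : qbr q ((j : ℤ) + 1) ≠ 0 := by
    exact_mod_cast qbr_natCast_ne_zero q hq (j + 1) (hroot _ (by omega) (by omega))
  have hbr : qbr q ((r : ℤ) + 1) ≠ 0 := by
    exact_mod_cast qbr_natCast_ne_zero q hq (r + 1) (hroot _ (by omega) (by omega))
  rw [qbinom, qbinom, qbinom, show j + r + 1 + 1 - (j + 1) = r + 1 by omega,
    show j + r + 1 - j = r + 1 by omega, show j + r + 1 - (j + 1) = r by omega,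
    qfac_succ q (j + r + 1), qfac_succ q j, qfac_succ q r,
    show ((j + r + 1 : ℕ) : ℤ) + 1 = ((j : ℤ) + 1) + ((r : ℤ) + 1) by push_cast; ring,
    qbr_add q hq, show (j : ℤ) - (j + r + 1 : ℕ) = -((r : ℤ) + 1) by push_cast; ring]
  field_simp

lemma kap_succ_succ (n i j : ℕ) :
    kap n (i + 1) (j + 1) = kap n i j - 2 * n - i + j + 2 := by
  have hi : ((i + 1 : ℕ) : ℤ) * ((i + 1 : ℕ) - 3) = i * (i - 3) + (i - 1) * 2 := by push_cast; ring
  have hj : ((j + 1 : ℕ) : ℤ) * ((j + 1 : ℕ) + 1) = j * (j + 1) + (j + 1) * 2 := by push_cast; ring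
  rw [kap, kap, hi, hj, Int.add_mul_ediv_right _ _ two_ne_zero,
    Int.add_mul_ediv_right _ _ two_ne_zero]
  push_cast
  ring

lemma kap_succ_right (n i j : ℕ) : kap n i (j + 1) = kap n i j - n + j + 1 := by
  have hj : ((j + 1 : ℕ) : ℤ) * ((j + 1 : ℕ) + 1) = j * (j + 1) + (j + 1) * 2 := by push_cast; ring
  rw [kap, kap, hj, Int.add_mul_ediv_right _ _ two_ne_zero]
  push_cast
  ring

theorem statement_2 (a q : ℂ) (ha : a ≠ 0) (hq : q ≠ 0) (n i j : ℕ)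
    (hroot : ∀ k : ℕ, 1 ≤ k → k ≤ i + 1 → q ^ (2 * k) ≠ 1)
    (hij : j < i) :
    lamE a q n (i + 1) (j + 1) =
      a ^ (-2 : ℤ) * q ^ (-(2 * ((n : ℤ) + (i : ℤ) - (j : ℤ) - 1))) * lamE a q n i j +
        a ^ (-1 : ℤ) * q ^ (-((n : ℤ) + (i : ℤ) - (j : ℤ) - 2)) *
          qbrA a q ((n : ℤ) + (i : ℤ) - (j : ℤ) - 2) * lamE a q n i (j + 1) := by
  have hpascal := qbinom_succ_succ q hq hij fun k h1 h2 => hroot k h1 (by omega)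
  rw [lamE, lamE, lamE, kap_succ_succ, kap_succ_right, hpascal,
    show i + 1 - (j + 1) = i - (j + 1) + 1 by omega, show i - j = i - (j + 1) + 1 by omega,
    qbrAP_succ, qbrAP_succ]
  push_cast
  rw [show (n : ℤ) + (i + 1) - (j + 1) - 2 = n + i - j - 2 by ring,
    show (n : ℤ) + i - (j + 1) - 2 = n + i - j - 2 - 1 by ring]
  simp only [two_mul, zpow_add₀ ha, zpow_add₀ hq, zpow_sub₀ ha, zpow_sub₀ hq, zpow_neg,
    zpow_natCast]
  field_simp
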